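/- arXiv:2204.08509 — 3 statements merged into one kernel-verified Lean document; each statement's English description precedes it below -/
import Mathlib

section
/- Let p be a prime with p ≡ 1 (mod 3), and let x, y be integers with p^t = x^2 + 27y^2 for some t ≥ 1 and gcd(x, p) = 1. Define sequences by x_0 = x, y_0 = y, x_{ℓ} = x_0·x_{ℓ-1} − 27·y_0·y_{ℓ-1}, y_{ℓ} = x_0·y_{ℓ-1} + y_0·x_{ℓ-1}. Then gcd(x_ℓ, p) = 1 for all ℓ ≥ 0. -/
/-! Modulo `p` we have `x² + 27y² = 0`, which collapses the recursion to `X ℓ ≡ (2x)^ℓ · x`: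
the step reads `x · (2x)^ℓ x - 27y · (2x)^ℓ y = (2x)^ℓ (x² - 27y²) = (2x)^ℓ · 2x²`.
Since `p ∤ x` and `p ≠ 2` (as `p ≡ 1 mod 3`), this is nonzero mod `p`. -/

theorem Int.gcd_natCast_eq_one_iff_intCast_ne_zero {p : ℕ} (hp : p.Prime) (a : ℤ) :
    Int.gcd a p = 1 ↔ (a : ZMod p) ≠ 0 := by
  rw [Int.gcd_eq_natAbs, Int.natAbs_natCast, Nat.gcd_comm, ← Nat.Coprime,
    hp.coprime_iff_not_dvd, ← Int.natCast_dvd, ← ZMod.intCast_zmod_eq_zero_iff_dvd]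

theorem recurrence_eq_of_sq_add_mul_sq_eq_zero {R : Type*} [CommRing R] {a b d : R}
    (had : a ^ 2 + d * b ^ 2 = 0) {X Y : ℕ → R} (hX0 : X 0 = a) (hY0 : Y 0 = b)
    (hXr : ∀ ℓ, X (ℓ + 1) = a * X ℓ - d * b * Y ℓ)
    (hYr : ∀ ℓ, Y (ℓ + 1) = a * Y ℓ + b * X ℓ) (ℓ : ℕ) :
    X ℓ = (2 * a) ^ ℓ * a ∧ Y ℓ = (2 * a) ^ ℓ * b := by
  induction ℓ with
  | zero => simp [hX0, hY0]
  | succ n ih =>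
    rw [hXr, hYr, ih.1, ih.2]
    constructor
    · linear_combination (-(2 * a) ^ n) * had
    · ring

theorem stmt_1 (p : ℕ) (hp : p.Prime) (hp3 : p % 3 = 1)
    (t : ℕ) (ht : 1 ≤ t) (x y : ℤ)
    (hxy : (p : ℤ) ^ t = x ^ 2 + 27 * y ^ 2) (hcop : Int.gcd x (p : ℤ) = 1)
    (X Y : ℕ → ℤ) (hX0 : X 0 = x) (hY0 : Y 0 = y)
    (hXr : ∀ ℓ, X (ℓ + 1) = x * X ℓ - 27 * y * Y ℓ)
    (hYr : ∀ ℓ, Y (ℓ + 1) = x * Y ℓ + y * X ℓ) :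
    ∀ ℓ, Int.gcd (X ℓ) (p : ℤ) = 1 := by
  have : Fact p.Prime := ⟨hp⟩
  have hx : (x : ZMod p) ≠ 0 := (Int.gcd_natCast_eq_one_iff_intCast_ne_zero hp x).1 hcop
  have h2 : (2 : ZMod p) ≠ 0 := by
    have hp2 : ¬ p ∣ 2 := fun h ↦ by have := Nat.le_of_dvd two_pos h; have := hp.two_le; omega
    exact_mod_cast (ZMod.natCast_eq_zero_iff 2 p).not.2 hp2
  have hsq : (x : ZMod p) ^ 2 + 27 * (y : ZMod p) ^ 2 = 0 := by
    have := congrArg (Int.cast : ℤ → ZMod p) hxy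
    push_cast at this
    rwa [ZMod.natCast_self, zero_pow (by omega), eq_comm] at this
  intro ℓ
  rw [Int.gcd_natCast_eq_one_iff_intCast_ne_zero hp,
    (recurrence_eq_of_sq_add_mul_sq_eq_zero (X := fun n ↦ (X n : ZMod p))
      (Y := fun n ↦ (Y n : ZMod p)) hsq (by simp [hX0]) (by simp [hY0])
      (fun n ↦ by simp [hXr]) (fun n ↦ by simp [hYr]) ℓ).1]
  exact mul_ne_zero (pow_ne_zero _ (mul_ne_zero h2 hx)) hx
end

section
/- Let s ≥ 1 be a real number with s ≥ 2 (playing the role of q^{1/4}), and let c, d be integers with s^2 = c^2 + 4d^2, d ≠ 0, and |c| < (2√3/3)·|d|. Then among the four numbers (s^2 + 4d·s − 1)/4, (s^2 − 4d·s − 1)/4, (−s^2 + 2c·s − 1)/4, (−s^2 − 2c·s − 1)/4, exactly one is positive. -/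
set_option maxHeartbeats 1000000 in
theorem stmt_14 (s : ℝ) (hs : 2 ≤ s) (c d : ℤ)
    (hcd : s ^ 2 = (c : ℝ) ^ 2 + 4 * (d : ℝ) ^ 2) (hd : d ≠ 0)
    (hcond : (|c| : ℝ) < 2 * Real.sqrt 3 / 3 * |d|) :
    ∃! i : Fin 4,
      0 < ![(s ^ 2 + 4 * d * s - 1) / 4,
            (s ^ 2 - 4 * d * s - 1) / 4,
            (-s ^ 2 + 2 * c * s - 1) / 4,
            (-s ^ 2 - 2 * c * s - 1) / 4] i := by
  have habsC : ((|c| : ℤ) : ℝ) = |(c : ℝ)| := by push_cast; ring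
  have habsD : ((|d| : ℤ) : ℝ) = |(d : ℝ)| := by push_cast; ring
  rw [habsD] at hcond
  have hDpos : (0:ℝ) < |(d:ℝ)| := by
    simp [abs_pos]
    exact_mod_cast hd
  have hCnn : (0:ℝ) ≤ |(c:ℝ)| := abs_nonneg _
  have h3 : Real.sqrt 3 ^ 2 = 3 := Real.sq_sqrt (by norm_num)
  have hsq : 3 * |(c:ℝ)|^2 < 4 * |(d:ℝ)|^2 := by nlinarith [Real.sqrt_nonneg 3]
  have hc2 : ((c:ℝ))^2 = |(c:ℝ)|^2 := (sq_abs _).symm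
  have hd2 : ((d:ℝ))^2 = |(d:ℝ)|^2 := (sq_abs _).symm
  have hsD : s < 4 * |(d:ℝ)| := by nlinarith
  have hsC : 2 * |(c:ℝ)| < s := by nlinarith
  have hcub : (c:ℝ) ≤ |(c:ℝ)| := le_abs_self _
  have hclb : -|(c:ℝ)| ≤ (c:ℝ) := neg_abs_le _
  have hspos : (0:ℝ) < s := by linarith
  -- entries 2,3 always negative
  have h2 : ¬ (0 < (-s ^ 2 + 2 * (c:ℝ) * s - 1) / 4) := by nlinarith
  have h3' : ¬ (0 < (-s ^ 2 - 2 * (c:ℝ) * s - 1) / 4) := by nlinarith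
  rcases hd.lt_or_gt with hdn | hdp
  · have hdn' : (d:ℝ) < 0 := by exact_mod_cast hdn
    have habs : |(d:ℝ)| = -(d:ℝ) := abs_of_neg hdn'
    refine ⟨1, ?_, ?_⟩
    · have : (0:ℝ) < (s ^ 2 - 4 * (d:ℝ) * s - 1) / 4 := by nlinarith
      simpa using this
    · intro j hj
      fin_cases j
      · exfalso
        simp at hj
        rw [habs] at hsD
        nlinarith
      · rfl
      · exact absurd (by simpa using hj) h2
      · exact absurd (by simpa using hj) h3'
  · have hdp' : (0:ℝ) < (d:ℝ) := by exact_mod_cast hdp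
    have habs : |(d:ℝ)| = (d:ℝ) := abs_of_pos hdp'
    refine ⟨0, ?_, ?_⟩
    · have : (0:ℝ) < (s ^ 2 + 4 * (d:ℝ) * s - 1) / 4 := by nlinarith
      simpa using this
    · intro j hj
      fin_cases j
      · rfl
      · exfalso
        simp at hj
        rw [habs] at hsD
        nlinarith
      · exact absurd (by simpa using hj) h2
      · exact absurd (by simpa using hj) h3'
end

section
/- Let z = x + 3√3·i·y with x, y nonzero integers. Then Arg(z) is not a rational multiple of π. -/
/-!
Put `a = x + y√-27 ∈ ℤ√(-27)`, so that `z` is the image of `a` under the embedding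
`√-27 ↦ 3√3 i`. If `arg z ∈ ℚπ`, some power `zⁿ` (`n ≥ 1`) is real, i.e. `aⁿ = conj aⁿ`.
Since `p ∣ N(a) = x² + 27y²` but `p ∤ x`, reducing `√-27 ↦ x / y` defines a ring map
`ψ : ℤ√(-27) → 𝔽_p` with `ψ(conj a) = 0` and `ψ(a) = 2x ≠ 0` (as `p` is odd),
so `ψ(a)ⁿ ≠ ψ(conj a)ⁿ`.
-/

open Complex

theorem Complex.exists_pow_im_eq_zero_of_arg_eq_rat_mul_pi (z : ℂ) (r : ℚ)
    (h : z.arg = r * Real.pi) : ∃ n ≠ 0, (z ^ n).im = 0 := by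
  refine ⟨r.den, r.den_ne_zero, ?_⟩
  have hsin : Real.sin (r.den * z.arg) = 0 := by
    rw [h, ← mul_assoc, ← Rat.cast_natCast, ← Rat.cast_mul, Rat.den_mul_eq_num, Rat.cast_intCast,
      Real.sin_int_mul_pi]
  rw [← norm_mul_exp_arg_mul_I z, mul_pow, ← exp_nat_mul, ← ofReal_pow, ← mul_assoc,
    ← ofReal_natCast, ← ofReal_mul, im_ofReal_mul, exp_ofReal_mul_I_im, hsin, mul_zero]

namespace Zsqrtd

theorem im_lift_ofReal_mul_I {d : ℤ} (s : ℝ) (hs : (s * I) * (s * I) = d) (b : ℤ√d) :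
    (lift ⟨s * I, hs⟩ b).im = b.im * s := by
  simp

theorem im_pow_ne_zero_of_prime_dvd_norm {p : ℕ} [Fact p.Prime] (hp2 : p ≠ 2) {d : ℤ} {a : ℤ√d}
    (hnorm : (p : ℤ) ∣ a.norm) (hre : ¬(p : ℤ) ∣ a.re) {n : ℕ} (hn : n ≠ 0) :
    (a ^ n).im ≠ 0 := by
  have hre0 : (a.re : ZMod p) ≠ 0 := by rwa [Ne, ZMod.intCast_zmod_eq_zero_iff_dvd]
  have hnorm0 : (a.re : ZMod p) * a.re = d * a.im * a.im := by
    rw [← sub_eq_zero]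
    exact_mod_cast (ZMod.intCast_zmod_eq_zero_iff_dvd _ p).mpr (by rwa [← norm_def])
  have him0 : (a.im : ZMod p) ≠ 0 := fun h =>
    hre0 (mul_self_eq_zero.mp (by rw [hnorm0, h, mul_zero]))
  set c : ZMod p := a.re / a.im
  have hc : c * c = d := by
    rw [div_mul_div_comm, hnorm0, mul_assoc, mul_div_cancel_right₀ _ (mul_ne_zero him0 him0)]
  set ψ : ℤ√d →+* ZMod p := lift ⟨c, hc⟩
  have hψa : ψ a = 2 * a.re := by
    rw [lift_apply_apply, mul_div_cancel₀ _ him0, two_mul]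
  have hψstar : ψ (star a) = 0 := by
    rw [lift_apply_apply, re_star, im_star, Int.cast_neg, neg_mul, mul_div_cancel₀ _ him0,
      add_neg_cancel]
  intro him
  have hself : star (a ^ n) = a ^ n := Zsqrtd.ext (re_star _) (by rw [im_star, him, neg_zero])
  have h2 : (2 : ZMod p) ≠ 0 := Ring.two_ne_zero (by rwa [ZMod.ringChar_zmod_n])
  have := congrArg ψ hself
  rw [star_pow, map_pow, map_pow, hψa, hψstar, zero_pow hn] at this
  exact pow_ne_zero n (mul_ne_zero h2 hre0) this.symm

end Zsqrtd

theorem stmt_16_general (p : ℕ) (hp : p.Prime) (hp3 : p % 3 = 1)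
    (t : ℕ) (ht : 1 ≤ t) (x y : ℤ)
    (hxy : (p : ℤ) ^ t = x ^ 2 + 27 * y ^ 2) (hcop : Int.gcd x (p : ℤ) = 1) :
    ¬∃ r : ℚ, Complex.arg ((x : ℂ) + 3 * Real.sqrt 3 * (y : ℝ) * Complex.I) = r * Real.pi := by
  have : Fact p.Prime := ⟨hp⟩
  rintro ⟨r, hr⟩
  obtain ⟨n, hn, him⟩ := Complex.exists_pow_im_eq_zero_of_arg_eq_rat_mul_pi _ r hr
  have hs : ((3 * √3 : ℝ) * I) * ((3 * √3 : ℝ) * I) = ((-27 : ℤ) : ℂ) := by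
    have h3 : (√3 : ℂ) * √3 = 3 := by exact_mod_cast Real.mul_self_sqrt (by norm_num : (0 : ℝ) ≤ 3)
    push_cast
    linear_combination (9 * I ^ 2) * h3 + 27 * I_sq
  have hz : (x : ℂ) + 3 * √3 * (y : ℝ) * I = Zsqrtd.lift ⟨_, hs⟩ (⟨x, y⟩ : ℤ√(-27)) := by
    rw [Zsqrtd.lift_apply_apply]
    push_cast
    ring
  rw [hz, ← map_pow, Zsqrtd.im_lift_ofReal_mul_I, mul_eq_zero, Int.cast_eq_zero] at him
  have hnorm : (p : ℤ) ∣ (⟨x, y⟩ : ℤ√(-27)).norm := by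
    rw [Zsqrtd.norm_def, show x * x - -27 * y * y = (p : ℤ) ^ t by rw [hxy]; ring]
    exact dvd_pow_self _ (by omega)
  have hx : ¬(p : ℤ) ∣ x := fun h =>
    (Nat.prime_iff_prime_int.mp hp).not_isUnit
      ((Int.isCoprime_iff_gcd_eq_one.mpr hcop).isUnit_of_dvd' h dvd_rfl)
  exact Zsqrtd.im_pow_ne_zero_of_prime_dvd_norm (by omega) hnorm hx hn
    (him.resolve_right (by positivity))

theorem stmt_16 (p : ℕ) (hp : p.Prime) (hp3 : p % 3 = 1)
    (t : ℕ) (ht : 1 ≤ t) (x y : ℤ) (hx : x ≠ 0) (hy : y ≠ 0)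
    (hxy : (p : ℤ) ^ t = x ^ 2 + 27 * y ^ 2) (hcop : Int.gcd x (p : ℤ) = 1) :
    ¬∃ r : ℚ, Complex.arg ((x : ℂ) + 3 * Real.sqrt 3 * (y : ℝ) * Complex.I) = r * Real.pi :=
  stmt_16_general p hp hp3 t ht x y hxy hcop
end
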